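/- Let ⟨M, x⟩ be a pointed Gärdenfors model and M_QPG its G-counterpart. Then for every simple inequality formula φ: M, x ⊨ φ if and only if e(φ^△) = 1 in M_QPG. -/

import Mathlib

/-- Classical propositional formulas (over `~` and `∧`). -/
inductive CPForm : Type
  | atom : ℕ → CPForm
  | neg  : CPForm → CPForm
  | and  : CPForm → CPForm → CPForm

/-- Boolean evaluation of classical formulas. -/
def cpeval (v : ℕ → Bool) : CPForm → Bool
  | .atom n => v n
  | .neg φ => !(cpeval v φ)
  | .and φ ψ => cpeval v φ && cpeval v ψ

/-- `φ` is a classical tautology. -/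
def CPTaut (φ : CPForm) : Prop := ∀ v : ℕ → Bool, cpeval v φ = true

/-- The extension `‖φ‖` of a classical formula in a model with valuation `v`. -/
def cpset {W : Type} (v : ℕ → Set W) : CPForm → Set W
  | .atom n => v n
  | .neg φ => (cpset v φ)ᶜ
  | .and φ ψ => cpset v φ ∩ cpset v ψ

/-- Defined classical implication `φ ⊃ ψ := ~(φ ∧ ~ψ)`. -/
def cpImp (φ ψ : CPForm) : CPForm := (φ.and ψ.neg).neg

/-- Defined classical disjunction `φ ∨ ψ := ~(~φ ∧ ~ψ)`. -/
def cpOr (φ ψ : CPForm) : CPForm := ((φ.neg).and ψ.neg).neg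

/-- A classical contradiction `p ∧ ~p`. -/
def cpBot : CPForm := (CPForm.atom 0).and (CPForm.atom 0).neg

/-- A classical tautology `~(p ∧ ~p)`. -/
def cpTop : CPForm := cpBot.neg

/-- Formulas of the language `L_QG`: atoms `B φ` for classical `φ`,
closed under `∧`, `∨`, `→_G`, `⤙_G`. -/
inductive QGForm : Type
  | bel   : CPForm → QGForm
  | and   : QGForm → QGForm → QGForm
  | or    : QGForm → QGForm → QGForm
  | imp   : QGForm → QGForm → QGForm
  | coimp : QGForm → QGForm → QGForm

/-- Gödel implication on `[0,1] ⊆ ℝ`. -/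
noncomputable def gimp (a b : ℝ) : ℝ := if a ≤ b then 1 else b

/-- Gödel co-implication on `[0,1] ⊆ ℝ`. -/
noncomputable def gcoimp (a b : ℝ) : ℝ := if a ≤ b then 0 else a

/-- The bi-Gödel valuation of `L_QG` formulas in a QG model given by measure `μ`
and classical valuation `v`: `e(Bφ) = μ(‖φ‖)`. -/
noncomputable def qgeval {W : Type} (μ : Set W → ℝ) (v : ℕ → Set W) : QGForm → ℝ
  | .bel φ => μ (cpset v φ)
  | .and α β => min (qgeval μ v α) (qgeval μ v β)
  | .or α β => max (qgeval μ v α) (qgeval μ v β)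
  | .imp α β => gimp (qgeval μ v α) (qgeval μ v β)
  | .coimp α β => gcoimp (qgeval μ v α) (qgeval μ v β)

/-- `μ` is an uncertainty measure on `W`: `[0,1]`-valued, monotone w.r.t. `⊆`,
and `μ(W) > μ(∅)`. -/
def IsUncertainty {W : Type} (μ : Set W → ℝ) : Prop :=
  (∀ X : Set W, μ X ∈ Set.Icc (0:ℝ) 1) ∧ Monotone μ ∧ μ ∅ < μ Set.univ

/-- `⊤_G` in `L_QG`. -/
def qTop : QGForm := (QGForm.bel (CPForm.atom 0)).imp (QGForm.bel (CPForm.atom 0))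
/-- `⊥_G` in `L_QG`. -/
def qBot : QGForm := (QGForm.bel (CPForm.atom 0)).coimp (QGForm.bel (CPForm.atom 0))
/-- Gödel negation `~_G α := α →_G ⊥_G`. -/
def qNot (α : QGForm) : QGForm := α.imp qBot
/-- `△α := (⊤_G ⤙_G α) →_G ⊥_G`. -/
def qDelta (α : QGForm) : QGForm := (qTop.coimp α).imp qBot
/-- `α ↔_G β := (α →_G β) ∧ (β →_G α)`. -/
def qIff (α β : QGForm) : QGForm := (α.imp β).and (β.imp α)

/-- Validity of an `L_QG` formula on an uncertainty frame `⟨W, μ⟩`: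
value `1` in every QG model on the frame. -/
def QGValidOnFrame {W : Type} (μ : Set W → ℝ) (α : QGForm) : Prop :=
  ∀ v : ℕ → Set W, qgeval μ v α = 1

/-- A finitely additive probability measure on `P(W)`, valued in `[0,1]`. -/
def IsProbMeasure {W : Type} (π : Set W → ℝ) : Prop :=
  π ∅ = 0 ∧ π Set.univ = 1 ∧ (∀ X : Set W, π X ∈ Set.Icc (0:ℝ) 1) ∧
    ∀ A B : Set W, Disjoint A B → π (A ∪ B) = π A + π B

/-- Simple inequality formulas: Boolean combinations (via `~`, `∧`, `∨`, `⊃`)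
of inequalities `χ ≲ χ'` between classical formulas. -/
inductive SIF : Type
  | leq : CPForm → CPForm → SIF
  | neg : SIF → SIF
  | and : SIF → SIF → SIF
  | or  : SIF → SIF → SIF
  | imp : SIF → SIF → SIF

/-- Satisfaction of a SIF at a point of a Gärdenfors model: since SIFs contain no
free propositional atoms, it only depends on the measure `P` attached to the point
(and the valuation `v`). -/
def SIFsat {W : Type} (P : Set W → ℝ) (v : ℕ → Set W) : SIF → Prop
  | .leq χ χ' => P (cpset v χ) ≤ P (cpset v χ')
  | .neg φ => ¬ SIFsat P v φ
  | .and φ ψ => SIFsat P v φ ∧ SIFsat P v ψ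
  | .or φ ψ => SIFsat P v φ ∨ SIFsat P v ψ
  | .imp φ ψ => SIFsat P v φ → SIFsat P v ψ

/-- The translation `φ^△` of SIFs into `L_QG`. -/
def sifTrans : SIF → QGForm
  | .leq χ χ' => qDelta ((QGForm.bel χ).imp (QGForm.bel χ'))
  | .neg φ => qNot (sifTrans φ)
  | .and φ ψ => (sifTrans φ).and (sifTrans ψ)
  | .or φ ψ => (sifTrans φ).or (sifTrans ψ)
  | .imp φ ψ => (sifTrans φ).imp (sifTrans ψ)

/-- `μ` satisfies the Kraft–Pratt–Seidenberg conditions `μKPS_m` for all `m`: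
for all families `X_0,…,X_m`, `Y_0,…,Y_m` of subsets of `W`, if `μ(X_j) ≤ μ(Y_j)`
for all `j < m` and every `w ∈ W` belongs to exactly as many `X_i`'s as `Y_i`'s,
then `μ(X_m) ≥ μ(Y_m)`. -/
def muKPS {W : Type} (μ : Set W → ℝ) : Prop :=
  ∀ (m : ℕ) (X Y : Fin (m + 1) → Set W),
    (∀ j : Fin m, μ (X j.castSucc) ≤ μ (Y j.castSucc)) →
    (∀ w : W, Nat.card {i : Fin (m + 1) // w ∈ X i} = Nat.card {i : Fin (m + 1) // w ∈ Y i}) →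
    μ (Y (Fin.last m)) ≤ μ (X (Fin.last m))

/-! The translation of a SIF only takes the values `0` and `1`, so the Gödel connectives act on
it as Boolean ones; the single numerical fact needed is that `μ(‖χ‖) ≤ 1` forces
`1 ≤ μ(‖χ‖) →_G μ(‖χ'‖)` to mean `μ(‖χ‖) ≤ μ(‖χ'‖)`. -/

theorem one_le_gimp_iff {a b : ℝ} (ha : a ≤ 1) : 1 ≤ gimp a b ↔ a ≤ b := by
  unfold gimp
  split_ifs with hab
  · simp [hab]
  · exact iff_of_false (by linarith [not_le.mp hab]) hab

section Eval

variable {W : Type} (μ : Set W → ℝ) (v : ℕ → Set W)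

@[simp]
theorem qgeval_qBot : qgeval μ v qBot = 0 := by
  simp [qBot, qgeval, gcoimp]

@[simp]
theorem qgeval_qTop : qgeval μ v qTop = 1 := by
  simp [qTop, qgeval, gimp]

theorem qgeval_qNot (α : QGForm) :
    qgeval μ v (qNot α) = if qgeval μ v α ≤ 0 then 1 else 0 := by
  simp [qNot, qgeval, gimp]

theorem qgeval_qDelta (α : QGForm) :
    qgeval μ v (qDelta α) = if 1 ≤ qgeval μ v α then 1 else 0 := by
  by_cases h : 1 ≤ qgeval μ v α <;> simp [qDelta, qgeval, gimp, gcoimp, h]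

open scoped Classical in
theorem qgeval_sifTrans (hμ : ∀ X, μ X ≤ 1) (φ : SIF) :
    qgeval μ v (sifTrans φ) = if SIFsat μ v φ then 1 else 0 := by
  induction φ with
  | leq χ χ' =>
    simp only [sifTrans, SIFsat, qgeval_qDelta, qgeval, one_le_gimp_iff (hμ _)]
    congr
  | neg φ ih =>
    by_cases hφ : SIFsat μ v φ <;> simp [sifTrans, SIFsat, qgeval_qNot, ih, hφ]
  | and φ ψ ihφ ihψ =>
    by_cases hφ : SIFsat μ v φ <;> by_cases hψ : SIFsat μ v ψ <;>
      simp [sifTrans, SIFsat, qgeval, ihφ, ihψ, hφ, hψ]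
  | or φ ψ ihφ ihψ =>
    by_cases hφ : SIFsat μ v φ <;> by_cases hψ : SIFsat μ v ψ <;>
      simp [sifTrans, SIFsat, qgeval, ihφ, ihψ, hφ, hψ]
  | imp φ ψ ihφ ihψ =>
    by_cases hφ : SIFsat μ v φ <;> by_cases hψ : SIFsat μ v ψ <;>
      simp [sifTrans, SIFsat, qgeval, gimp, ihφ, ihψ, hφ, hψ]

end Eval

theorem pointed_Gardenfors_to_QPG_general (U : Type)
    (P : U → Set U → ℝ) (hP : ∀ y : U, IsProbMeasure (P y))
    (v : ℕ → Set U) (x : U) (φ : SIF) :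
    SIFsat (P x) v φ ↔ qgeval (P x) v (sifTrans φ) = 1 := by
  rw [qgeval_sifTrans (P x) v (fun X => ((hP x).2.2.1 X).2)]
  simp

/-- let `⟨M, x⟩` be a pointed Gärdenfors model and `M_QPG` its
G-counterpart (the QPG model over the same carrier and valuation whose measure is
`P_x`). Then for every simple inequality formula `φ`:
`M, x ⊨ φ` iff `e(φ^△) = 1` in `M_QPG`. -/
theorem pointed_Gardenfors_to_QPG (U : Type) (_ : Nonempty U)
    (P : U → Set U → ℝ) (hP : ∀ y : U, IsProbMeasure (P y))
    (v : ℕ → Set U) (x : U) (φ : SIF) :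
    SIFsat (P x) v φ ↔ qgeval (P x) v (sifTrans φ) = 1 :=
  pointed_Gardenfors_to_QPG_general U P hP v x φ
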